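/- Let A and B be invertible formal power series over a commutative ring with constant term 1, and let ξ be a ring element. Define the 'twist' of a power series P(t) with constant term 1 by rank r and ξ as P^{ξ}(t) := (1+ξ t)^r · P(t/(1+ξ t)) (expanded formally). Then for the quotient series Q(t) = A(t)/B(t) with coefficients c_k, the coefficients of the twisted quotient A^{ξ}(t)/B^{ξ}(t) are given by: the k-th coefficient equals Σ_{i=1}^{k} (−1)^{k−i} C(k−1, i−1) c_i ξ^{k−i} for every k ≥ 1, where both A and B are twisted with the same rank r. -/

import Mathlib

/-! Twisting is multiplicative up to the factor `(1 + ξt)^r`: `(QB)^ξ(t) = Q(t/(1 + ξt)) · B^ξ(t)`,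
so in the quotient `A^ξ / B^ξ` that factor cancels and what remains is `Q(t/(1 + ξt))`. Its
`k`-th coefficient is read off from the negative binomial series
`(t/(1 + ξt))^i = Σ_k (-1)^(k-i) C(k-1, i-1) ξ^(k-i) t^k`. -/

open PowerSeries

/-- Formal composition `P(τ(t))` of a power series `P` with a power series `τ` of zero
constant term: the `k`-th coefficient is `Σ_{i ≤ k} pᵢ · (coefficient of t^k in τ^i)`. -/
noncomputable def psComp {R : Type*} [CommRing R] (P τ : PowerSeries R) : PowerSeries R :=
  PowerSeries.mk fun k => ∑ i ∈ Finset.range (k + 1), (coeff i P) * coeff k (τ ^ i)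

/-- The twist of a power series `P(t)` by rank `r` and `ξ`:
`P^ξ(t) = (1 + ξt)^r · P(t / (1 + ξt))`, expanded formally. -/
noncomputable def twist {R : Type*} [CommRing R] (r : ℕ) (ξ : R) (P : PowerSeries R) :
    PowerSeries R :=
  (1 + C ξ * X) ^ r * psComp P (X * Ring.inverse (1 + C ξ * X))

section
variable {R : Type*} [CommRing R]

theorem coeff_pow_eq_zero_of_constantCoeff_eq_zero {τ : R⟦X⟧} (hτ : constantCoeff τ = 0)
    {n i : ℕ} (h : n < i) : coeff n (τ ^ i) = 0 :=
  X_pow_dvd_iff.mp (pow_dvd_pow_of_dvd (X_dvd_iff.mpr hτ) i) n h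

theorem psComp_eq_subst {τ : R⟦X⟧} (hτ : constantCoeff τ = 0) (P : R⟦X⟧) :
    psComp P τ = P.subst τ := by
  ext k
  rw [psComp, coeff_mk, coeff_subst' (HasSubst.of_constantCoeff_zero' hτ),
    finsum_eq_sum_of_support_subset _ (s := Finset.range (k + 1))]
  · rfl
  · intro i hi
    rw [Finset.coe_range, Set.mem_Iio]
    by_contra! hki
    exact hi (by simp [coeff_pow_eq_zero_of_constantCoeff_eq_zero hτ hki])

theorem psComp_mul {τ : R⟦X⟧} (hτ : constantCoeff τ = 0) (P Q : R⟦X⟧) :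
    psComp (P * Q) τ = psComp P τ * psComp Q τ := by
  simp only [psComp_eq_subst hτ, subst_mul (HasSubst.of_constantCoeff_zero' hτ)]

@[simp]
theorem constantCoeff_psComp (P τ : R⟦X⟧) : constantCoeff (psComp P τ) = constantCoeff P := by
  rw [← coeff_zero_eq_constantCoeff_apply, psComp, coeff_mk]
  simp

noncomputable def twistVar (ξ : R) : R⟦X⟧ := X * Ring.inverse (1 + C ξ * X)

@[simp]
theorem constantCoeff_twistVar (ξ : R) : constantCoeff (twistVar ξ) = 0 := by
  simp [twistVar]

theorem twist_eq (r : ℕ) (ξ : R) (P : R⟦X⟧) :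
    twist r ξ P = (1 + C ξ * X) ^ r * psComp P (twistVar ξ) := rfl

@[simp]
theorem constantCoeff_twist (r : ℕ) (ξ : R) (P : R⟦X⟧) :
    constantCoeff (twist r ξ P) = constantCoeff P := by
  simp [twist_eq]

theorem twist_mul (r : ℕ) (ξ : R) (P Q : R⟦X⟧) :
    twist r ξ (P * Q) = psComp P (twistVar ξ) * twist r ξ Q := by
  rw [twist_eq, twist_eq, psComp_mul (constantCoeff_twistVar ξ)]
  ring

theorem twist_mul_inverse_twist (r : ℕ) (ξ : R) (A : R⟦X⟧) {B : R⟦X⟧}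
    (hB : IsUnit (constantCoeff B)) :
    twist r ξ A * Ring.inverse (twist r ξ B) = psComp (A * Ring.inverse B) (twistVar ξ) := by
  have hBtw : IsUnit (twist r ξ B) := by
    rwa [isUnit_iff_constantCoeff, constantCoeff_twist]
  conv_lhs => rw [← Ring.inverse_mul_cancel_right B A (isUnit_iff_constantCoeff.mpr hB)]
  rw [twist_mul, mul_assoc, Ring.mul_inverse_cancel _ hBtw, mul_one]

theorem one_add_C_mul_X_eq_rescale (ξ : R) : 1 + C ξ * X = rescale (-ξ) (1 - X) := by
  rw [map_sub, map_one, rescale_X, map_neg, neg_mul, sub_neg_eq_add]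

theorem inverse_one_add_C_mul_X_pow (ξ : R) (i : ℕ) :
    Ring.inverse (1 + C ξ * X) ^ i = rescale (-ξ) (invOneSubPow R i : R⟦X⟧) := by
  rw [Ring.inverse_pow, one_add_C_mul_X_eq_rescale, ← map_pow, ← invOneSubPow_inv_eq_one_sub_pow]
  exact Ring.inverse_unit (Units.map (rescale (-ξ)).toMonoidHom (invOneSubPow R i)⁻¹)

theorem coeff_twistVar_pow (ξ : R) {i k : ℕ} (hi : 1 ≤ i) (hik : i ≤ k) :
    coeff k (twistVar ξ ^ i) = (-1 : R) ^ (k - i) * ((k - 1).choose (i - 1) : R) * ξ ^ (k - i) := by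
  rw [twistVar, mul_pow, inverse_one_add_C_mul_X_pow, coeff_X_pow_mul', if_pos hik, coeff_rescale,
    invOneSubPow_val_eq_mk_sub_one_add_choose_of_pos R i (by omega), coeff_mk,
    show i - 1 + (k - i) = k - 1 by omega, neg_pow]
  ring

end

theorem coeff_twist_quotient_general {R : Type*} [CommRing R] (A B : PowerSeries R)
    (hB : constantCoeff B = 1) (ξ : R) (r : ℕ)
    (c : ℕ → R) (hc : ∀ k, c k = coeff k (A * Ring.inverse B))
    (k : ℕ) (hk : 1 ≤ k) :
    coeff k (twist r ξ A * Ring.inverse (twist r ξ B)) =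
      ∑ i ∈ Finset.Icc 1 k,
        (-1 : R) ^ (k - i) * ((k - 1).choose (i - 1) : R) * c i * ξ ^ (k - i) := by
  rw [twist_mul_inverse_twist r ξ A (hB ▸ isUnit_one), psComp, coeff_mk]
  have hsub : Finset.Icc 1 k ⊆ Finset.range (k + 1) := fun i hi => by
    simp only [Finset.mem_Icc, Finset.mem_range] at hi ⊢; omega
  rw [← Finset.sum_subset hsub]
  · refine Finset.sum_congr rfl fun i hi => ?_
    rw [Finset.mem_Icc] at hi
    rw [coeff_twistVar_pow ξ hi.1 hi.2, hc]
    ring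
  · intro i hik hi
    have hi0 : i = 0 := by simp only [Finset.mem_range, Finset.mem_Icc] at hik hi; omega
    simp [hi0, coeff_one, Nat.one_le_iff_ne_zero.mp hk]

/-- Let `A`, `B` be formal power series with constant term `1` over a commutative ring,
`ξ` a ring element, and `c_k` the coefficients of the quotient `Q = A/B`. Then the `k`-th
coefficient of the twisted quotient `A^ξ / B^ξ` (both twisted with the same rank `r`) is
`Σ_{i=1}^{k} (-1)^{k-i} C(k-1, i-1) cᵢ ξ^{k-i}` for every `k ≥ 1`. -/
theorem coeff_twist_quotient {R : Type*} [CommRing R] (A B : PowerSeries R)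
    (hA : constantCoeff A = 1) (hB : constantCoeff B = 1) (ξ : R) (r : ℕ)
    (c : ℕ → R) (hc : ∀ k, c k = coeff k (A * Ring.inverse B))
    (k : ℕ) (hk : 1 ≤ k) :
    coeff k (twist r ξ A * Ring.inverse (twist r ξ B)) =
      ∑ i ∈ Finset.Icc 1 k,
        (-1 : R) ^ (k - i) * ((k - 1).choose (i - 1) : R) * c i * ξ ^ (k - i) :=
  coeff_twist_quotient_general A B hB ξ r c hc k hk
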